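/- Let N, N₀ be symmetric matrices in ℝ^{n×n} with N₀ positive definite, let p, p₀ ∈ ℝ^n, b₀, ν ∈ ℝ, and suppose ξ* ∈ ℝ and x* ∈ ℝ^n satisfy: (i) (N + ξ*N₀)x* + p + ξ*p₀ = 0, (ii) x*ᵀN₀x* + 2p₀ᵀx* + b₀ − ν = 0, and (iii) N + ξ*N₀ ⪰ 0. Then x* is a global minimizer of q(x) = xᵀNx + 2pᵀx over the set {x : xᵀN₀x + 2p₀ᵀx + b₀ = ν}. -/

import Mathlib

open Matrix

/-! The Lagrangian `q + ξ c` (with `c x = xᵀN₀x + 2p₀ᵀx`) is the quadratic with Hessian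
`N + ξN₀ ⪰ 0` and linear part `p + ξp₀`, and `x*` is a stationary point of it; expanding
around `x*` shows that `x*` is a global minimizer of the Lagrangian. On the constraint set
`c` takes the constant value `ν - b₀`, so `x*` also minimizes `q` there. -/

namespace Matrix

variable {ι R : Type*} [Fintype ι]

def quadratic [CommRing R] (A : Matrix ι ι R) (b x : ι → R) : R :=
  x ⬝ᵥ A *ᵥ x + 2 * (b ⬝ᵥ x)

section CommRing

variable [CommRing R]

theorem quadratic_add_smul (A B : Matrix ι ι R) (b d : ι → R) (c : R) (x : ι → R) :
    quadratic (A + c • B) (b + c • d) x = quadratic A b x + c * quadratic B d x := by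
  simp only [quadratic, add_mulVec, smul_mulVec, dotProduct_add, add_dotProduct,
    dotProduct_smul, smul_dotProduct, smul_eq_mul]
  ring

theorem IsSymm.dotProduct_mulVec_comm {A : Matrix ι ι R} (hA : A.IsSymm) (x y : ι → R) :
    x ⬝ᵥ A *ᵥ y = y ⬝ᵥ A *ᵥ x := by
  rw [dotProduct_mulVec, ← mulVec_transpose, hA.eq, dotProduct_comm]

theorem quadratic_eq_add_of_mulVec_add_eq_zero {A : Matrix ι ι R} (hA : A.IsSymm)
    {b x₀ : ι → R} (h : A *ᵥ x₀ + b = 0) (x : ι → R) :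
    quadratic A b x = quadratic A b x₀ + (x - x₀) ⬝ᵥ A *ᵥ (x - x₀) := by
  have hb : b = -(A *ᵥ x₀) := eq_neg_of_add_eq_zero_right h
  simp only [quadratic, hb, mulVec_sub, sub_dotProduct, dotProduct_sub, neg_dotProduct,
    dotProduct_comm (A *ᵥ x₀), hA.dotProduct_mulVec_comm x₀ x]
  ring

end CommRing

theorem quadratic_le_of_posSemidef [CommRing R] [PartialOrder R] [IsOrderedRing R] [StarRing R]
    [TrivialStar R] {A : Matrix ι ι R} (hA : A.PosSemidef) {b x₀ : ι → R}
    (h : A *ᵥ x₀ + b = 0) (x : ι → R) : quadratic A b x₀ ≤ quadratic A b x := by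
  rw [quadratic_eq_add_of_mulVec_add_eq_zero (isHermitian_iff_isSymm.mp hA.isHermitian) h x]
  simpa using hA.dotProduct_mulVec_nonneg (x - x₀)

end Matrix

theorem stmt_13_general (n : ℕ) (N N₀ : Matrix (Fin n) (Fin n) ℝ)
    (p p₀ : Fin n → ℝ) (b₀ ν : ℝ) (ξ : ℝ) (xstar : Fin n → ℝ)
    (hstat : (N + ξ • N₀) *ᵥ xstar + p + ξ • p₀ = 0)
    (hfeas : xstar ⬝ᵥ N₀ *ᵥ xstar + 2 * (p₀ ⬝ᵥ xstar) + b₀ - ν = 0)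
    (hpsd : (N + ξ • N₀).PosSemidef) :
    ∀ x : Fin n → ℝ, x ⬝ᵥ N₀ *ᵥ x + 2 * (p₀ ⬝ᵥ x) + b₀ = ν →
      xstar ⬝ᵥ N *ᵥ xstar + 2 * (p ⬝ᵥ xstar) ≤ x ⬝ᵥ N *ᵥ x + 2 * (p ⬝ᵥ x) := by
  intro x hx
  have hlagrange := quadratic_le_of_posSemidef hpsd (by rwa [← add_assoc]) x
  have hconstraint : quadratic N₀ p₀ x = quadratic N₀ p₀ xstar := by
    unfold quadratic; linarith
  rw [quadratic_add_smul, quadratic_add_smul, hconstraint, add_le_add_iff_right] at hlagrange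
  exact hlagrange

/-- Sufficiency of the Moré optimality conditions for the generalized trust
region subproblem (GTRS). -/
theorem stmt_13 (n : ℕ) (N N₀ : Matrix (Fin n) (Fin n) ℝ)
    (hN : N.IsSymm) (hN₀sym : N₀.IsSymm) (hN₀ : N₀.PosDef)
    (p p₀ : Fin n → ℝ) (b₀ ν : ℝ) (ξ : ℝ) (xstar : Fin n → ℝ)
    (hstat : (N + ξ • N₀) *ᵥ xstar + p + ξ • p₀ = 0)
    (hfeas : xstar ⬝ᵥ N₀ *ᵥ xstar + 2 * (p₀ ⬝ᵥ xstar) + b₀ - ν = 0)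
    (hpsd : (N + ξ • N₀).PosSemidef) :
    ∀ x : Fin n → ℝ, x ⬝ᵥ N₀ *ᵥ x + 2 * (p₀ ⬝ᵥ x) + b₀ = ν →
      xstar ⬝ᵥ N *ᵥ xstar + 2 * (p ⬝ᵥ xstar) ≤ x ⬝ᵥ N *ᵥ x + 2 * (p ⬝ᵥ x) :=
  stmt_13_general n N N₀ p p₀ b₀ ν ξ xstar hstat hfeas hpsd
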